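/- A set J of precomputed atoms is a stable model of a mini-gringo program Π if and only if the standard interpretation J↑ (the standard interpretation of σ₀ making exactly the atoms in J true) is a stable model of the first-order theory τ*Π. -/

import Mathlib

/-! # mini-gringo and the two-sorted signature σ₀ -/

/-- Precomputed terms: numerals and symbolic constants. -/
inductive PTerm : Type
  | num : ℤ → PTerm
  | sym : String → PTerm
deriving DecidableEq

/-- A total order on precomputed terms such that `num m ≤ num n` iff `m ≤ n`. -/
def PTerm.le : PTerm → PTerm → Prop
  | .num m, .num n => m ≤ n
  | .num _, .sym _ => True
  | .sym _, .num _ => False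
  | .sym s, .sym t => s ≤ t

/-- Comparison symbols. -/
inductive CRel : Type
  | req | rne | rlt | rgt | rle | rge
deriving DecidableEq

def CRel.holds : CRel → PTerm → PTerm → Prop
  | .req, a, b => a = b
  | .rne, a, b => a ≠ b
  | .rlt, a, b => PTerm.le a b ∧ a ≠ b
  | .rgt, a, b => PTerm.le b a ∧ a ≠ b
  | .rle, a, b => PTerm.le a b
  | .rge, a, b => PTerm.le b a

/-- mini-gringo terms (with general variables represented by natural numbers). -/
inductive MGT : Type
  | pre : PTerm → MGT
  | var : ℕ → MGT
  | abs : MGT → MGT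
  | add : MGT → MGT → MGT
  | sub : MGT → MGT → MGT
  | mul : MGT → MGT → MGT
  | div : MGT → MGT → MGT
  | mod : MGT → MGT → MGT
  | intv : MGT → MGT → MGT

/-- Truncation toward zero, as performed by gringo. -/
def tdiv (m n : ℤ) : ℤ := Int.tdiv m n

/-- The set of values `[t]` of a (ground) term. -/
def MGT.vals : MGT → Set PTerm
  | .pre p => {p}
  | .var _ => ∅
  | .abs t => {q | ∃ n : ℤ, PTerm.num n ∈ t.vals ∧ q = .num |n|}
  | .add t u => {q | ∃ m n : ℤ, PTerm.num m ∈ t.vals ∧ PTerm.num n ∈ u.vals ∧ q = .num (m + n)}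
  | .sub t u => {q | ∃ m n : ℤ, PTerm.num m ∈ t.vals ∧ PTerm.num n ∈ u.vals ∧ q = .num (m - n)}
  | .mul t u => {q | ∃ m n : ℤ, PTerm.num m ∈ t.vals ∧ PTerm.num n ∈ u.vals ∧ q = .num (m * n)}
  | .div t u => {q | ∃ m n : ℤ, PTerm.num m ∈ t.vals ∧ PTerm.num n ∈ u.vals ∧ n ≠ 0 ∧
      q = .num (tdiv m n)}
  | .mod t u => {q | ∃ m n : ℤ, PTerm.num m ∈ t.vals ∧ PTerm.num n ∈ u.vals ∧ n ≠ 0 ∧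
      q = .num (m - n * tdiv m n)}
  | .intv t u => {q | ∃ m n k : ℤ, PTerm.num m ∈ t.vals ∧ PTerm.num n ∈ u.vals ∧
      m ≤ k ∧ k ≤ n ∧ q = .num k}

/-- Values of a tuple of ground terms. -/
def valsList : List MGT → Set (List PTerm)
  | [] => {[]}
  | t :: ts => {rs | ∃ r rs', r ∈ t.vals ∧ rs' ∈ valsList ts ∧ rs = r :: rs'}

/-- `t` is ground (contains no variables). -/
def MGT.ground : MGT → Prop
  | .pre _ => True
  | .var _ => False
  | .abs t => t.ground
  | .add t u | .sub t u | .mul t u | .div t u | .mod t u | .intv t u => t.ground ∧ u.ground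

/-- Substituting precomputed terms for variables. -/
def MGT.subst (σ : ℕ → PTerm) : MGT → MGT
  | .pre p => .pre p
  | .var n => .pre (σ n)
  | .abs t => .abs (t.subst σ)
  | .add t u => .add (t.subst σ) (u.subst σ)
  | .sub t u => .sub (t.subst σ) (u.subst σ)
  | .mul t u => .mul (t.subst σ) (u.subst σ)
  | .div t u => .div (t.subst σ) (u.subst σ)
  | .mod t u => .mod (t.subst σ) (u.subst σ)
  | .intv t u => .intv (t.subst σ) (u.subst σ)

/-- Applying a valuation (a map on symbolic constants) to a term. -/
def MGT.appV (v : String → PTerm) : MGT → MGT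
  | .pre (.sym c) => .pre (v c)
  | .pre p => .pre p
  | .var n => .var n
  | .abs t => .abs (t.appV v)
  | .add t u => .add (t.appV v) (u.appV v)
  | .sub t u => .sub (t.appV v) (u.appV v)
  | .mul t u => .mul (t.appV v) (u.appV v)
  | .div t u => .div (t.appV v) (u.appV v)
  | .mod t u => .mod (t.appV v) (u.appV v)
  | .intv t u => .intv (t.appV v) (u.appV v)

/-- Bound on variable indices occurring in a term. -/
def MGT.vb : MGT → ℕ
  | .pre _ => 0
  | .var n => n + 1
  | .abs t => t.vb
  | .add t u | .sub t u | .mul t u | .div t u | .mod t u | .intv t u => max t.vb u.vb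

/-- Atoms `p(t₁,…,tₙ)`. -/
structure MAtom : Type where
  p : String
  args : List MGT

/-- The predicate symbol `p/n` of an atom. -/
def MAtom.pn (a : MAtom) : String × ℕ := (a.p, a.args.length)

inductive MLit : Type
  | pos : MAtom → MLit
  | neg : MAtom → MLit
  | nneg : MAtom → MLit

structure MComp : Type where
  rel : CRel
  l : MGT
  r : MGT

inductive MBodyElem : Type
  | lit : MLit → MBodyElem
  | cmp : MComp → MBodyElem

inductive MHead : Type
  | basic : MAtom → MHead
  | choice : MAtom → MHead
  | cons : MHead

structure MRule : Type where
  head : MHead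
  body : List MBodyElem

abbrev MProgram := List MRule

def MAtom.subst (σ : ℕ → PTerm) (a : MAtom) : MAtom := ⟨a.p, a.args.map (MGT.subst σ)⟩
def MAtom.appV (v : String → PTerm) (a : MAtom) : MAtom := ⟨a.p, a.args.map (MGT.appV v)⟩

def MLit.subst (σ : ℕ → PTerm) : MLit → MLit
  | .pos a => .pos (a.subst σ)
  | .neg a => .neg (a.subst σ)
  | .nneg a => .nneg (a.subst σ)
def MLit.appV (v : String → PTerm) : MLit → MLit
  | .pos a => .pos (a.appV v)
  | .neg a => .neg (a.appV v)
  | .nneg a => .nneg (a.appV v)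

def MComp.subst (σ : ℕ → PTerm) (c : MComp) : MComp := ⟨c.rel, c.l.subst σ, c.r.subst σ⟩
def MComp.appV (v : String → PTerm) (c : MComp) : MComp := ⟨c.rel, c.l.appV v, c.r.appV v⟩

def MBodyElem.subst (σ : ℕ → PTerm) : MBodyElem → MBodyElem
  | .lit l => .lit (l.subst σ)
  | .cmp c => .cmp (c.subst σ)
def MBodyElem.appV (v : String → PTerm) : MBodyElem → MBodyElem
  | .lit l => .lit (l.appV v)
  | .cmp c => .cmp (c.appV v)

def MHead.subst (σ : ℕ → PTerm) : MHead → MHead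
  | .basic a => .basic (a.subst σ)
  | .choice a => .choice (a.subst σ)
  | .cons => .cons
def MHead.appV (v : String → PTerm) : MHead → MHead
  | .basic a => .basic (a.appV v)
  | .choice a => .choice (a.appV v)
  | .cons => .cons

def MRule.subst (σ : ℕ → PTerm) (R : MRule) : MRule :=
  ⟨R.head.subst σ, R.body.map (MBodyElem.subst σ)⟩
def MRule.appV (v : String → PTerm) (R : MRule) : MRule :=
  ⟨R.head.appV v, R.body.map (MBodyElem.appV v)⟩

/-- Bound on variable indices of a rule. -/
def MAtom.vb (a : MAtom) : ℕ := (a.args.map MGT.vb).foldr max 0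
def MLit.vb : MLit → ℕ
  | .pos a | .neg a | .nneg a => a.vb
def MBodyElem.vb : MBodyElem → ℕ
  | .lit l => l.vb
  | .cmp c => max c.l.vb c.r.vb
def MHead.vb : MHead → ℕ
  | .basic a | .choice a => a.vb
  | .cons => 0
def MRule.vb (R : MRule) : ℕ := max R.head.vb ((R.body.map MBodyElem.vb).foldr max 0)

/-- Precomputed (ground) atoms. -/
abbrev GAtom := String × List PTerm

/-! ## Infinitary propositional formulas and their stable models -/

inductive IProp (A : Type) : Type 1
  | atom : A → IProp A
  | bot : IProp A
  | conj : (ι : Type) → (ι → IProp A) → IProp A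
  | disj : (ι : Type) → (ι → IProp A) → IProp A
  | impl : IProp A → IProp A → IProp A

/-- Satisfaction in the infinitary logic of here-and-there, for an HT-interpretation
`⟨Hs, Ts⟩` with `Hs ⊆ Ts`. -/
def IProp.htSat {A : Type} (Hs Ts : Set A) : IProp A → Prop
  | .atom a => a ∈ Hs
  | .bot => False
  | .conj _ f => ∀ i, (f i).htSat Hs Ts
  | .disj _ f => ∃ i, (f i).htSat Hs Ts
  | .impl F G => ((F.htSat Hs Ts) → (G.htSat Hs Ts)) ∧ ((F.htSat Ts Ts) → (G.htSat Ts Ts))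

def IProp.top {A : Type} : IProp A := .conj PEmpty (fun x => x.elim)

/-- Stable models (answer sets) of a set of infinitary propositional formulas. -/
def StablePropSet {A : Type} (X : Set (IProp A)) (J : Set A) : Prop :=
  (∀ φ ∈ X, φ.htSat J J) ∧ ∀ H : Set A, H ⊂ J → ¬ ∀ φ ∈ X, φ.htSat H J

/-- Strong equivalence of infinitary propositional formulas: they have the same
HT-models. -/
def StrongEquivProp {A : Type} (F G : IProp A) : Prop :=
  ∀ Hs Ts : Set A, Hs ⊆ Ts → (F.htSat Hs Ts ↔ G.htSat Hs Ts)

/-! ## The translation τ -/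

open scoped Classical in
noncomputable def tauLit : MLit → IProp GAtom
  | .pos a => .disj {rs // rs ∈ valsList a.args} fun rs => .atom (a.p, rs.1)
  | .neg a => .disj {rs // rs ∈ valsList a.args} fun rs => .impl (.atom (a.p, rs.1)) .bot
  | .nneg a => .disj {rs // rs ∈ valsList a.args} fun rs =>
      .impl (.impl (.atom (a.p, rs.1)) .bot) .bot

open scoped Classical in
noncomputable def tauCmp (c : MComp) : IProp GAtom :=
  if ∃ r1 ∈ c.l.vals, ∃ r2 ∈ c.r.vals, c.rel.holds r1 r2 then IProp.top else .bot

noncomputable def tauBodyElem : MBodyElem → IProp GAtom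
  | .lit l => tauLit l
  | .cmp c => tauCmp c

noncomputable def tauBody (b : List MBodyElem) : IProp GAtom :=
  .conj {e // e ∈ b} fun e => tauBodyElem e.1

/-- The translation τ of a ground rule. -/
noncomputable def tauRule (R : MRule) : IProp GAtom :=
  match R.head with
  | .basic a => .impl (tauBody R.body)
      (.conj {rs // rs ∈ valsList a.args} fun rs => .atom (a.p, rs.1))
  | .choice a => .impl (tauBody R.body)
      (.conj {rs // rs ∈ valsList a.args} fun rs =>
        .disj Bool fun bb =>
          cond bb (.atom (a.p, rs.1)) (.impl (.atom (a.p, rs.1)) .bot))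
  | .cons => .impl (tauBody R.body) .bot

/-- `τPrg`: translations of all instances of the rules of `Prg`. -/
noncomputable def tauProg (Prg : MProgram) : Set (IProp GAtom) :=
  {φ | ∃ R ∈ Prg, ∃ σ : ℕ → PTerm, φ = tauRule (R.subst σ)}

/-- Stable models of a mini-gringo program. -/
noncomputable def ProgStable (Prg : MProgram) (J : Set GAtom) : Prop :=
  StablePropSet (tauProg Prg) J

/-! ## First-order formulas over σ₀ -/

/-- Terms of the integer sort. -/
inductive ITm : Type
  | const : ℤ → ITm
  | var : ℕ → ITm
  | abs : ITm → ITm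
  | add : ITm → ITm → ITm
  | sub : ITm → ITm → ITm
  | mul : ITm → ITm → ITm

def ITm.eval (η : ℕ → ℤ) : ITm → ℤ
  | .const n => n
  | .var n => η n
  | .abs t => |t.eval η|
  | .add t u => t.eval η + u.eval η
  | .sub t u => t.eval η - u.eval η
  | .mul t u => t.eval η * u.eval η

/-- Terms of the general sort (with the integer sort as a subsort). -/
inductive GTm : Type
  | int : ITm → GTm
  | pre : PTerm → GTm
  | var : ℕ → GTm

/-- Evaluation of a general term, given a valuation `v` interpreting symbolic constants
and assignments `ξ` (general variables) and `η` (integer variables). -/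
def GTm.eval (v : String → PTerm) (ξ : ℕ → PTerm) (η : ℕ → ℤ) : GTm → PTerm
  | .int t => .num (t.eval η)
  | .pre (.sym c) => v c
  | .pre p => p
  | .var n => ξ n

/-- First-order formulas over the two-sorted signature σ₀. -/
inductive S0F : Type
  | patom : String → List GTm → S0F
  | cmp : CRel → GTm → GTm → S0F
  | bot : S0F
  | and : S0F → S0F → S0F
  | or : S0F → S0F → S0F
  | imp : S0F → S0F → S0F
  | allG : ℕ → S0F → S0F
  | exG : ℕ → S0F → S0F
  | allI : ℕ → S0F → S0F
  | exI : ℕ → S0F → S0F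

/-- Classical satisfaction over the interpretation of σ₀ that is standard for the
placeholders interpreted by `v`, with the precomputed atoms in `J` true. -/
def S0F.sat (v : String → PTerm) (J : Set GAtom) :
    (ξ : ℕ → PTerm) → (η : ℕ → ℤ) → S0F → Prop
  | ξ, η, .patom p ts => (p, ts.map (GTm.eval v ξ η)) ∈ J
  | ξ, η, .cmp r a b => r.holds (a.eval v ξ η) (b.eval v ξ η)
  | _, _, .bot => False
  | ξ, η, .and F G => F.sat v J ξ η ∧ G.sat v J ξ η
  | ξ, η, .or F G => F.sat v J ξ η ∨ G.sat v J ξ η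
  | ξ, η, .imp F G => F.sat v J ξ η → G.sat v J ξ η
  | ξ, η, .allG n F => ∀ d : PTerm, F.sat v J (Function.update ξ n d) η
  | ξ, η, .exG n F => ∃ d : PTerm, F.sat v J (Function.update ξ n d) η
  | ξ, η, .allI n F => ∀ i : ℤ, F.sat v J ξ (Function.update η n i)
  | ξ, η, .exI n F => ∃ i : ℤ, F.sat v J ξ (Function.update η n i)

/-- Here-and-there satisfaction over σ₀ (all predicate symbols `p/n` intensional,
comparisons extensional), for the HT-interpretation `⟨Hs, J⟩`. -/
def S0F.htSat (v : String → PTerm) (Hs J : Set GAtom) :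
    (ξ : ℕ → PTerm) → (η : ℕ → ℤ) → S0F → Prop
  | ξ, η, .patom p ts => (p, ts.map (GTm.eval v ξ η)) ∈ Hs
  | ξ, η, .cmp r a b => r.holds (a.eval v ξ η) (b.eval v ξ η)
  | _, _, .bot => False
  | ξ, η, .and F G => F.htSat v Hs J ξ η ∧ G.htSat v Hs J ξ η
  | ξ, η, .or F G => F.htSat v Hs J ξ η ∨ G.htSat v Hs J ξ η
  | ξ, η, .imp F G => (F.htSat v Hs J ξ η → G.htSat v Hs J ξ η) ∧ (F.sat v J ξ η → G.sat v J ξ η)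
  | ξ, η, .allG n F => ∀ d : PTerm, F.htSat v Hs J (Function.update ξ n d) η
  | ξ, η, .exG n F => ∃ d : PTerm, F.htSat v Hs J (Function.update ξ n d) η
  | ξ, η, .allI n F => ∀ i : ℤ, F.htSat v Hs J ξ (Function.update η n i)
  | ξ, η, .exI n F => ∃ i : ℤ, F.htSat v Hs J ξ (Function.update η n i)

/-- The valuation of standard interpretations: every constant denotes itself. -/
def symv : String → PTerm := fun c => .sym c

def xi0 : ℕ → PTerm := fun _ => .num 0
def eta0 : ℕ → ℤ := fun _ => 0

/-- `I` (determined by `v` and `J`) is a stable model of the set `Γ` of σ₀-sentences,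
relative to the assignments `ξ`, `η`. -/
def FOStable (v : String → PTerm) (Γ : Set S0F) (J : Set GAtom)
    (ξ : ℕ → PTerm) (η : ℕ → ℤ) : Prop :=
  (∀ F ∈ Γ, F.sat v J ξ η) ∧
  ∀ Hs : Set GAtom, Hs ⊂ J → ¬ ∀ F ∈ Γ, F.htSat v Hs J ξ η

/-! ## The translations val, τ^B and τ* -/

def S0F.top : S0F := .imp .bot .bot

/-- Negation. -/
def S0F.neg (F : S0F) : S0F := .imp F .bot

/-- The formula `val_t(V)`, with fresh integer variables numbered from `i` on. -/
def valF : MGT → GTm → ℕ → S0F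
  | .pre p, V, _ => .cmp .req V (.pre p)
  | .var n, V, _ => .cmp .req V (.var n)
  | .abs t, V, i =>
      .exI i (.and (valF t (.int (.var i)) (i + 1))
        (.cmp .req V (.int (.abs (.var i)))))
  | .add t u, V, i =>
      .exI i (.exI (i + 1)
        (.and (valF t (.int (.var i)) (i + 2))
        (.and (valF u (.int (.var (i + 1))) (i + 2))
          (.cmp .req V (.int (.add (.var i) (.var (i + 1))))))))
  | .sub t u, V, i =>
      .exI i (.exI (i + 1)
        (.and (valF t (.int (.var i)) (i + 2))
        (.and (valF u (.int (.var (i + 1))) (i + 2))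
          (.cmp .req V (.int (.sub (.var i) (.var (i + 1))))))))
  | .mul t u, V, i =>
      .exI i (.exI (i + 1)
        (.and (valF t (.int (.var i)) (i + 2))
        (.and (valF u (.int (.var (i + 1))) (i + 2))
          (.cmp .req V (.int (.mul (.var i) (.var (i + 1))))))))
  | .div t u, V, i =>
      .exI i (.exI (i + 1) (.exI (i + 2)
        (.and (valF t (.int (.var i)) (i + 3))
        (.and (valF u (.int (.var (i + 1))) (i + 3))
        (.and (.cmp .rle (.int (.mul (.var (i + 2)) (.abs (.var (i + 1)))))
                         (.int (.abs (.var i))))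
        (.and (.cmp .rlt (.int (.abs (.var i)))
                         (.int (.mul (.add (.var (i + 2)) (.const 1)) (.abs (.var (i + 1))))))
          (.or (.and (.cmp .rge (.int (.mul (.var i) (.var (i + 1)))) (.int (.const 0)))
                     (.cmp .req V (.int (.var (i + 2)))))
               (.and (.cmp .rlt (.int (.mul (.var i) (.var (i + 1)))) (.int (.const 0)))
                     (.cmp .req V (.int (.sub (.const 0) (.var (i + 2)))))))))))))
  | .mod t u, V, i =>
      .exI i (.exI (i + 1) (.exI (i + 2)
        (.and (valF t (.int (.var i)) (i + 3))
        (.and (valF u (.int (.var (i + 1))) (i + 3))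
        (.and (.cmp .rle (.int (.mul (.var (i + 2)) (.abs (.var (i + 1)))))
                         (.int (.abs (.var i))))
        (.and (.cmp .rlt (.int (.abs (.var i)))
                         (.int (.mul (.add (.var (i + 2)) (.const 1)) (.abs (.var (i + 1))))))
          (.or (.and (.cmp .rge (.int (.mul (.var i) (.var (i + 1)))) (.int (.const 0)))
                     (.cmp .req V (.int (.sub (.var i) (.mul (.var (i + 2)) (.var (i + 1)))))))
               (.and (.cmp .rlt (.int (.mul (.var i) (.var (i + 1)))) (.int (.const 0)))
                     (.cmp .req V (.int (.add (.var i) (.mul (.var (i + 2)) (.var (i + 1))))))))))))))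
  | .intv t u, V, i =>
      .exI i (.exI (i + 1) (.exI (i + 2)
        (.and (valF t (.int (.var i)) (i + 3))
        (.and (valF u (.int (.var (i + 1))) (i + 3))
        (.and (.cmp .rle (.int (.var i)) (.int (.var (i + 2))))
        (.and (.cmp .rle (.int (.var (i + 2))) (.int (.var (i + 1))))
          (.cmp .req V (.int (.var (i + 2))))))))))

/-- `val_{t₁,…,tₙ}(V_g, …, V_{g+n-1})`. -/
def valsFml : List MGT → ℕ → S0F
  | [], _ => S0F.top
  | t :: ts, g => .and (valF t (.var g) 0) (valsFml ts (g + 1))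

def varsList (g k : ℕ) : List GTm := (List.range k).map fun i => .var (g + i)

/-- Existential quantification of the general variables `g, …, g+k-1`. -/
def exGs (g : ℕ) : ℕ → S0F → S0F
  | 0, F => F
  | k + 1, F => .exG g (exGs (g + 1) k F)

/-- Universal quantification of the general variables `0, …, n-1`. -/
def allGs : ℕ → S0F → S0F
  | 0, F => F
  | n + 1, F => .allG n (allGs n F)

/-- The translation τ^B of a literal or comparison, with fresh general variables
numbered from `g` on. -/
def tauBF : MBodyElem → ℕ → S0F
  | .lit (.pos a), g =>
      exGs g a.args.length
        (.and (valsFml a.args g) (.patom a.p (varsList g a.args.length)))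
  | .lit (.neg a), g =>
      exGs g a.args.length
        (.and (valsFml a.args g) (S0F.neg (.patom a.p (varsList g a.args.length))))
  | .lit (.nneg a), g =>
      exGs g a.args.length
        (.and (valsFml a.args g) (S0F.neg (S0F.neg (.patom a.p (varsList g a.args.length)))))
  | .cmp c, g =>
      .exG g (.exG (g + 1)
        (.and (valF c.l (.var g) 0)
        (.and (valF c.r (.var (g + 1)) 0)
          (.cmp c.rel (.var g) (.var (g + 1))))))

def tauBodyF (b : List MBodyElem) (g : ℕ) : S0F :=
  b.foldr (fun e F => .and (tauBF e g) F) S0F.top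

/-- The translation τ* of a mini-gringo rule. -/
def tauStar (R : MRule) : S0F :=
  match R.head with
  | .basic a =>
      allGs (R.vb + a.args.length)
        (.imp (.and (valsFml a.args R.vb) (tauBodyF R.body (R.vb + a.args.length)))
          (.patom a.p (varsList R.vb a.args.length)))
  | .choice a =>
      allGs (R.vb + a.args.length)
        (.imp (.and (valsFml a.args R.vb)
                (.and (tauBodyF R.body (R.vb + a.args.length))
                  (S0F.neg (S0F.neg (.patom a.p (varsList R.vb a.args.length))))))
          (.patom a.p (varsList R.vb a.args.length)))
  | .cons => allGs R.vb (.imp (tauBodyF R.body R.vb) .bot)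

/-- `τ*Prg`. -/
def tauStarProg (Prg : MProgram) : Set S0F := {F | ∃ R ∈ Prg, F = tauStar R}

/-! ## The grounding translation `F ↦ F^prop` -/

open scoped Classical in
noncomputable def S0F.toProp (v : String → PTerm) :
    (ξ : ℕ → PTerm) → (η : ℕ → ℤ) → S0F → IProp GAtom
  | ξ, η, .patom p ts => .atom (p, ts.map (GTm.eval v ξ η))
  | ξ, η, .cmp r a b => if r.holds (a.eval v ξ η) (b.eval v ξ η) then IProp.top else .bot
  | _, _, .bot => .bot
  | ξ, η, .and F G => .conj Bool fun bb => cond bb (F.toProp v ξ η) (G.toProp v ξ η)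
  | ξ, η, .or F G => .disj Bool fun bb => cond bb (F.toProp v ξ η) (G.toProp v ξ η)
  | ξ, η, .imp F G => .impl (F.toProp v ξ η) (G.toProp v ξ η)
  | ξ, η, .allG n F => .conj PTerm fun d => F.toProp v (Function.update ξ n d) η
  | ξ, η, .exG n F => .disj PTerm fun d => F.toProp v (Function.update ξ n d) η
  | ξ, η, .allI n F => .conj ℤ fun i => F.toProp v ξ (Function.update η n i)
  | ξ, η, .exI n F => .disj ℤ fun i => F.toProp v ξ (Function.update η n i)

/-! ## Programs with input and output -/

structure IOProgram : Type where
  rules : MProgram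
  PH : Finset String
  In : Finset (String × ℕ)
  Out : Finset (String × ℕ)

/-- The predicate symbol `pn` occurs in the rule `R`. -/
def occursRule (pn : String × ℕ) (R : MRule) : Prop :=
  (∃ a, (R.head = .basic a ∨ R.head = .choice a) ∧ a.pn = pn) ∨
  (∃ a, (MBodyElem.lit (.pos a) ∈ R.body ∨ MBodyElem.lit (.neg a) ∈ R.body ∨
         MBodyElem.lit (.nneg a) ∈ R.body) ∧ a.pn = pn)

/-- Well-formedness of an io-program: `In` and `Out` are disjoint and input symbols do
not occur in heads of rules. -/
def IOProgram.WF (Ω : IOProgram) : Prop :=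
  Disjoint Ω.In Ω.Out ∧
  ∀ R ∈ Ω.rules, ∀ a : MAtom, (R.head = .basic a ∨ R.head = .choice a) → a.pn ∉ Ω.In

def IOProgram.PublicSym (Ω : IOProgram) (pn : String × ℕ) : Prop := pn ∈ Ω.In ∨ pn ∈ Ω.Out
def IOProgram.PrivateSym (Ω : IOProgram) (pn : String × ℕ) : Prop :=
  pn ∉ Ω.In ∧ pn ∉ Ω.Out ∧ ∃ R ∈ Ω.rules, occursRule pn R
def IOProgram.PrivateAtom (Ω : IOProgram) (a : GAtom) : Prop :=
  Ω.PrivateSym (a.1, a.2.length)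
/-- Intensional symbols for the completion of an io-program: output and private
symbols (input symbols and comparisons are extensional). -/
def IOProgram.IntenSym (Ω : IOProgram) (pn : String × ℕ) : Prop :=
  pn ∈ Ω.Out ∨ Ω.PrivateSym pn

/-- `r` is not a placeholder. -/
def noPH (PH : Finset String) (r : PTerm) : Prop := ∀ c ∈ PH, r ≠ .sym c

/-- `v` is a valuation on `PH`: it maps placeholders to precomputed terms that are not
placeholders and is the identity elsewhere. -/
def StdForPH (PH : Finset String) (v : String → PTerm) : Prop :=
  (∀ c ∉ PH, v c = .sym c) ∧ ∀ c ∈ PH, noPH PH (v c)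

/-- `(v, I)` is an input for `Ω`. -/
def ValidInput (Ω : IOProgram) (v : String → PTerm) (I : Set GAtom) : Prop :=
  StdForPH Ω.PH v ∧
  ∀ a ∈ I, (a.1, a.2.length) ∈ Ω.In ∧ ∀ r ∈ a.2, noPH Ω.PH r

/-- The input atoms of a set of public atoms. -/
def IOProgram.inPart (Ω : IOProgram) (Pst : Set GAtom) : Set GAtom :=
  {a ∈ Pst | (a.1, a.2.length) ∈ Ω.In}

/-- `Pst` is an io-model of `Ω` for the input `(v, I)`: the set of public atoms of some
stable model of `v(Prg) ∪ I`. -/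
noncomputable def IOModel (Ω : IOProgram) (v : String → PTerm) (I : Set GAtom)
    (Pst : Set GAtom) : Prop :=
  ∃ J : Set GAtom,
    StablePropSet (tauProg (Ω.rules.map (MRule.appV v)) ∪ (fun a => IProp.atom a) '' I) J ∧
    Pst = {a ∈ J | Ω.PublicSym (a.1, a.2.length)}

/-! ## Satisfaction of the completion of an io-program -/

/-- Satisfaction of a ground literal, following τ^B. -/
def GLitSat (T : Set GAtom) : MLit → Prop
  | .pos a => ∃ rs ∈ valsList a.args, (a.p, rs) ∈ T
  | .neg a => ∃ rs ∈ valsList a.args, (a.p, rs) ∉ T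
  | .nneg a => ∃ rs ∈ valsList a.args, (a.p, rs) ∈ T

def GBodySat (T : Set GAtom) (b : List MBodyElem) : Prop :=
  ∀ e ∈ b, match e with
    | MBodyElem.lit l => GLitSat T l
    | MBodyElem.cmp c => ∃ r1 ∈ c.l.vals, ∃ r2 ∈ c.r.vals, c.rel.holds r1 r2

/-- The ground instance `(R.appV v).subst σ` supports the atom `(p, rs)` in `T`
(a disjunct of the completed definition of `p`). -/
def Supports (v : String → PTerm) (σ : ℕ → PTerm) (R : MRule) (T : Set GAtom)
    (p : String) (rs : List PTerm) : Prop :=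
  (∃ a : MAtom, ((R.appV v).subst σ).head = .basic a ∧ a.p = p ∧ rs ∈ valsList a.args ∧
     GBodySat T ((R.appV v).subst σ).body) ∨
  (∃ a : MAtom, ((R.appV v).subst σ).head = .choice a ∧ a.p = p ∧ rs ∈ valsList a.args ∧
     GBodySat T ((R.appV v).subst σ).body ∧ (p, rs) ∈ T)

/-- `T` satisfies the first-order completion of `v(Prg)` (intensional symbols: output and
private symbols of `Ω`). -/
def CompSat (Ω : IOProgram) (v : String → PTerm) (T : Set GAtom) : Prop :=
  (∀ p n, Ω.IntenSym (p, n) → ∀ rs : List PTerm, rs.length = n →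
     ((p, rs) ∈ T ↔ ∃ R ∈ Ω.rules, ∃ σ : ℕ → PTerm, Supports v σ R T p rs)) ∧
  (∀ R ∈ Ω.rules, R.head = .cons → ∀ σ : ℕ → PTerm,
     ¬ GBodySat T (((R.appV v).subst σ)).body)

/-- Satisfaction of the second-order completion `COMP[Ω]` (private symbols existentially
quantified) by the interpretation standard for `PH` determined by `v` and `T`. -/
def SatCompIO (Ω : IOProgram) (v : String → PTerm) (T : Set GAtom) : Prop :=
  ∃ Q : Set GAtom, (∀ a ∈ Q, Ω.PrivateAtom a) ∧
    CompSat Ω v ({a ∈ T | ¬ Ω.PrivateAtom a} ∪ Q)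

/-! ## Positive dependency graphs and tightness -/

/-- A vertex of the positive dependency graph of `Ω` for an input: a ground atom of an
output or private symbol whose arguments are not placeholders. -/
def IOProgram.IsVertex (Ω : IOProgram) (A : GAtom) : Prop :=
  ((A.1, A.2.length) ∈ Ω.Out ∨ Ω.PrivateSym (A.1, A.2.length)) ∧
  ∀ r ∈ A.2, noPH Ω.PH r

/-- Edge relation of the positive dependency graph of `Ω` for the input `(v, I)`. -/
def IODepEdge (Ω : IOProgram) (v : String → PTerm) (I : Set GAtom)
    (A B : GAtom) : Prop :=
  Ω.IsVertex A ∧ Ω.IsVertex B ∧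
  ∃ R ∈ Ω.rules, ∃ σ : ℕ → PTerm,
    (∃ a : MAtom, (((R.appV v).subst σ).head = .basic a ∨
        ((R.appV v).subst σ).head = .choice a) ∧
      a.p = A.1 ∧ A.2 ∈ valsList a.args) ∧
    (∃ a : MAtom, MBodyElem.lit (.pos a) ∈ ((R.appV v).subst σ).body ∧
      a.p = B.1 ∧ B.2 ∈ valsList a.args) ∧
    (∀ a : MAtom, (MBodyElem.lit (.pos a) ∈ ((R.appV v).subst σ).body ∨
        MBodyElem.lit (.nneg a) ∈ ((R.appV v).subst σ).body) →
      (a.p, a.args.length) ∈ Ω.In → ∃ rs ∈ valsList a.args, (a.p, rs) ∈ I) ∧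
    (∀ a : MAtom, MBodyElem.lit (.neg a) ∈ ((R.appV v).subst σ).body →
      (a.p, a.args.length) ∈ Ω.In → ∃ rs ∈ valsList a.args, (a.p, rs) ∉ I) ∧
    (∀ c : MComp, MBodyElem.cmp c ∈ ((R.appV v).subst σ).body →
      ∃ r1 ∈ c.l.vals, ∃ r2 ∈ c.r.vals, c.rel.holds r1 r2)

/-- `Ω` is locally tight on the input `(v, I)`: its positive dependency graph for this
input has no infinite walks. -/
def LocallyTight (Ω : IOProgram) (v : String → PTerm) (I : Set GAtom) : Prop :=
  ¬ ∃ w : ℕ → GAtom, ∀ n, IODepEdge Ω v I (w n) (w (n + 1))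

/-- Edge relation of the positive predicate dependency graph of `Prg`. -/
def PredEdge (Prg : MProgram) (pn pn' : String × ℕ) : Prop :=
  ∃ R ∈ Prg, (∃ a, (R.head = .basic a ∨ R.head = .choice a) ∧ a.pn = pn) ∧
    (∃ a, MBodyElem.lit (.pos a) ∈ R.body ∧ a.pn = pn')

/-- `Prg` is tight: its positive predicate dependency graph is acyclic. -/
def Tight (Prg : MProgram) : Prop := ∀ pn, ¬ Relation.TransGen (PredEdge Prg) pn pn



/-! ### Arithmetic lemmas about tdiv -/

lemma kuniq {a b k : ℤ} (hb : 0 < b) (h1 : k*b ≤ a) (h2 : a < (k+1)*b) : k = a / b := by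
  have h3 : k ≤ a / b := (Int.le_ediv_iff_mul_le hb).mpr h1
  have h4 : a / b < k + 1 := (Int.ediv_lt_iff_lt_mul hb).mpr h2
  omega

lemma tdiv_sign_nonneg {m n : ℤ} (hn : n ≠ 0) (h : 0 ≤ m * n) : m.tdiv n = |m| / |n| := by
  rcases le_or_gt 0 m with hm | hm <;> rcases le_or_gt 0 n with hn' | hn'
  · rw [abs_of_nonneg hm, abs_of_nonneg hn', Int.tdiv_eq_ediv_of_nonneg hm]
  · have hm0 : m = 0 := by nlinarith
    subst hm0; simp [Int.zero_tdiv]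
  · have hm0 : m = 0 ∨ n = 0 := by
      rcases lt_or_eq_of_le hn' with h' | h'
      · nlinarith
      · right; omega
    rcases hm0 with h' | h' <;> simp [h'] at *
  · rw [abs_of_neg hm, abs_of_neg hn']
    have : m.tdiv n = (-m).tdiv (-n) := by rw [Int.neg_tdiv, Int.tdiv_neg]; ring
    rw [this, Int.tdiv_eq_ediv_of_nonneg (by omega)]

lemma tdiv_sign_neg {m n : ℤ} (h : m * n < 0) : m.tdiv n = -(|m| / |n|) := by
  have hm : m ≠ 0 := by rintro rfl; simp at h
  have hn : n ≠ 0 := by rintro rfl; simp at h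
  rcases le_or_gt 0 m with hm' | hm' <;> rcases le_or_gt 0 n with hn' | hn'
  · nlinarith
  · rw [abs_of_nonneg hm', abs_of_neg hn']
    have : m.tdiv n = -(m.tdiv (-n)) := by rw [Int.tdiv_neg]; ring
    rw [this, Int.tdiv_eq_ediv_of_nonneg hm']
  · rw [abs_of_neg hm', abs_of_nonneg hn']
    have : m.tdiv n = -((-m).tdiv n) := by rw [Int.neg_tdiv]; ring
    rw [this, Int.tdiv_eq_ediv_of_nonneg (by omega)]
  · nlinarith

lemma tdiv_bounds {m n : ℤ} (hn : n ≠ 0) :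
    (|m| / |n|) * |n| ≤ |m| ∧ |m| < ((|m| / |n|) + 1) * |n| := by
  have hb : 0 < |n| := abs_pos.mpr hn
  exact ⟨Int.ediv_mul_le _ (by omega), Int.lt_ediv_add_one_mul_self _ hb⟩

lemma npos_of_bounds {m n k : ℤ} (h1 : k * |n| ≤ |m|) (h2 : |m| < (k+1) * |n|) : n ≠ 0 := by
  rintro rfl; simp at h1 h2; have := abs_nonneg m; omega

/-! ### variable bounds / congruence -/

def ITm.vlt (i : ℕ) : ITm → Prop
  | .const _ => True
  | .var n => n < i
  | .abs t => t.vlt i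
  | .add t u | .sub t u | .mul t u => t.vlt i ∧ u.vlt i

def GTm.vlt (i : ℕ) : GTm → Prop
  | .int t => t.vlt i
  | _ => True

lemma ITm.eval_congr {η η' : ℕ → ℤ} {i : ℕ} (t : ITm) (hv : t.vlt i)
    (h : ∀ n < i, η n = η' n) : t.eval η = t.eval η' := by
  induction t with
  | const n => rfl
  | var n => exact h n hv
  | abs t ih => simp [ITm.eval, ih hv]
  | add t u iht ihu => simp [ITm.eval, iht hv.1, ihu hv.2]
  | sub t u iht ihu => simp [ITm.eval, iht hv.1, ihu hv.2]
  | mul t u iht ihu => simp [ITm.eval, iht hv.1, ihu hv.2]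

lemma GTm.eval_congr {v ξ} {η η' : ℕ → ℤ} {i : ℕ} (t : GTm) (hv : t.vlt i)
    (h : ∀ n < i, η n = η' n) : t.eval v ξ η = t.eval v ξ η' := by
  cases t with
  | int t => simp [GTm.eval, ITm.eval_congr t hv h]
  | pre p => cases p <;> rfl
  | var n => rfl

lemma GTm.eval_update {v ξ η i j m} (t : GTm) (hv : t.vlt i) (hj : i ≤ j) :
    t.eval v ξ (Function.update η j m) = t.eval v ξ η :=
  GTm.eval_congr t hv (fun n hn => Function.update_of_ne (by omega) _ _)

lemma MGT.subst_congr {σ σ' : ℕ → PTerm} (t : MGT) (h : ∀ n < t.vb, σ n = σ' n) :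
    t.subst σ = t.subst σ' := by
  induction t with
  | pre p => rfl
  | var n => simp [MGT.subst]; exact h n (Nat.lt_succ_self n)
  | abs t ih => simp [MGT.subst]; exact ih h
  | add t u iht ihu | sub t u iht ihu | mul t u iht ihu | div t u iht ihu
  | mod t u iht ihu | intv t u iht ihu =>
      simp [MGT.subst]
      exact ⟨iht (fun n hn => h n (by simp [MGT.vb]; omega)),
             ihu (fun n hn => h n (by simp [MGT.vb]; omega))⟩


@[simp] lemma upd_self (η : ℕ → ℤ) (i : ℕ) (m : ℤ) : Function.update η i m i = m :=
  Function.update_self i m η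

lemma upd2_0 (η : ℕ → ℤ) (i : ℕ) (m n : ℤ) :
    Function.update (Function.update η i m) (i+1) n i = m := by
  rw [Function.update_of_ne (by omega), Function.update_self]

lemma upd3_0 (η : ℕ → ℤ) (i : ℕ) (m n k : ℤ) :
    Function.update (Function.update (Function.update η i m) (i+1) n) (i+2) k i = m := by
  rw [Function.update_of_ne (by omega), Function.update_of_ne (by omega), Function.update_self]

lemma upd3_1 (η : ℕ → ℤ) (i : ℕ) (m n k : ℤ) :
    Function.update (Function.update (Function.update η i m) (i+1) n) (i+2) k (i+1) = n := by
  rw [Function.update_of_ne (by omega), Function.update_self]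

@[simp] lemma pterm_le_num (m n : ℤ) : PTerm.le (.num m) (.num n) ↔ m ≤ n := Iff.rfl

lemma eval_int (v ξ η t) : GTm.eval v ξ η (GTm.int t) = .num (t.eval η) := rfl
lemma eval_gvar (v ξ η n) : GTm.eval v ξ η (GTm.var n) = ξ n := rfl
lemma eval_nvar (η : ℕ → ℤ) (n : ℕ) : ITm.eval η (.var n) = η n := rfl

lemma eval_update3 {v ξ η i m n k} (V : GTm) (hV : GTm.vlt i V) :
    GTm.eval v ξ (Function.update (Function.update (Function.update η i m) (i+1) n) (i+2) k) V
      = GTm.eval v ξ η V := by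
  rw [GTm.eval_update V (by exact hV) (by omega : i ≤ i+2),
      GTm.eval_update V (by exact hV) (by omega : i ≤ i+1),
      GTm.eval_update V hV (le_refl i)]

lemma valF_sat (J : Set GAtom) (t : MGT) : ∀ (V : GTm) (i : ℕ) (ξ : ℕ → PTerm) (η : ℕ → ℤ),
    V.vlt i → (S0F.sat symv J ξ η (valF t V i) ↔ V.eval symv ξ η ∈ (t.subst ξ).vals) := by
  induction t with
  | pre p =>
      intro V i ξ η hV
      cases p <;>
        simp [valF, S0F.sat, MGT.subst, MGT.vals, CRel.holds, GTm.eval, symv]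
  | var n =>
      intro V i ξ η hV
      simp [valF, S0F.sat, MGT.subst, MGT.vals, CRel.holds, GTm.eval]
  | abs t ih =>
      intro V i ξ η hV
      simp only [valF, S0F.sat, MGT.subst, MGT.vals, Set.mem_setOf_eq, CRel.holds,
        eval_int, ITm.eval, eval_nvar, upd_self]
      constructor
      · rintro ⟨m, h1, h2⟩
        rw [ih _ (i+1) ξ _ (by exact Nat.lt_succ_self i)] at h1
        simp only [eval_int, eval_nvar, upd_self] at h1
        rw [GTm.eval_update V hV (le_refl i)] at h2
        exact ⟨m, h1, h2⟩
      · rintro ⟨m, h1, h2⟩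
        refine ⟨m, ?_, ?_⟩
        · rw [ih _ (i+1) ξ _ (by exact Nat.lt_succ_self i)]
          simp only [eval_int, eval_nvar, upd_self]
          exact h1
        · rw [GTm.eval_update V hV (le_refl i)]
          exact h2
  | add t u iht ihu =>
      intro V i ξ η hV
      simp only [valF, S0F.sat, MGT.subst, MGT.vals, Set.mem_setOf_eq, CRel.holds,
        eval_int, eval_nvar, ITm.eval, upd_self, upd2_0]
      constructor
      · rintro ⟨m, n, h1, h2, h3⟩
        rw [iht _ (i+2) ξ _ (by exact (by omega : i < i+2))] at h1
        rw [ihu _ (i+2) ξ _ (by exact (by omega : i+1 < i+2))] at h2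
        simp only [eval_int, ITm.eval, upd_self, upd2_0] at h1 h2
        rw [GTm.eval_update V (by exact hV) (by omega : i ≤ i+1),
            GTm.eval_update V hV (le_refl i)] at h3
        exact ⟨m, n, h1, h2, h3⟩
      · rintro ⟨m, n, h1, h2, h3⟩
        refine ⟨m, n, ?_, ?_, ?_⟩
        · rw [iht _ (i+2) ξ _ (by exact (by omega : i < i+2))]
          simp only [eval_int, ITm.eval, upd_self, upd2_0]
          exact h1
        · rw [ihu _ (i+2) ξ _ (by exact (by omega : i+1 < i+2))]
          simp only [eval_int, ITm.eval, upd_self, upd2_0]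
          exact h2
        · rw [GTm.eval_update V (by exact hV) (by omega : i ≤ i+1),
              GTm.eval_update V hV (le_refl i)]
          exact h3
  | sub t u iht ihu =>
      intro V i ξ η hV
      simp only [valF, S0F.sat, MGT.subst, MGT.vals, Set.mem_setOf_eq, CRel.holds,
        eval_int, eval_nvar, ITm.eval, upd_self, upd2_0]
      constructor
      · rintro ⟨m, n, h1, h2, h3⟩
        rw [iht _ (i+2) ξ _ (by exact (by omega : i < i+2))] at h1
        rw [ihu _ (i+2) ξ _ (by exact (by omega : i+1 < i+2))] at h2
        simp only [eval_int, ITm.eval, upd_self, upd2_0] at h1 h2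
        rw [GTm.eval_update V (by exact hV) (by omega : i ≤ i+1),
            GTm.eval_update V hV (le_refl i)] at h3
        exact ⟨m, n, h1, h2, h3⟩
      · rintro ⟨m, n, h1, h2, h3⟩
        refine ⟨m, n, ?_, ?_, ?_⟩
        · rw [iht _ (i+2) ξ _ (by exact (by omega : i < i+2))]
          simp only [eval_int, ITm.eval, upd_self, upd2_0]
          exact h1
        · rw [ihu _ (i+2) ξ _ (by exact (by omega : i+1 < i+2))]
          simp only [eval_int, ITm.eval, upd_self, upd2_0]
          exact h2
        · rw [GTm.eval_update V (by exact hV) (by omega : i ≤ i+1),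
              GTm.eval_update V hV (le_refl i)]
          exact h3
  | mul t u iht ihu =>
      intro V i ξ η hV
      simp only [valF, S0F.sat, MGT.subst, MGT.vals, Set.mem_setOf_eq, CRel.holds,
        eval_int, eval_nvar, ITm.eval, upd_self, upd2_0]
      constructor
      · rintro ⟨m, n, h1, h2, h3⟩
        rw [iht _ (i+2) ξ _ (by exact (by omega : i < i+2))] at h1
        rw [ihu _ (i+2) ξ _ (by exact (by omega : i+1 < i+2))] at h2
        simp only [eval_int, ITm.eval, upd_self, upd2_0] at h1 h2
        rw [GTm.eval_update V (by exact hV) (by omega : i ≤ i+1),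
            GTm.eval_update V hV (le_refl i)] at h3
        exact ⟨m, n, h1, h2, h3⟩
      · rintro ⟨m, n, h1, h2, h3⟩
        refine ⟨m, n, ?_, ?_, ?_⟩
        · rw [iht _ (i+2) ξ _ (by exact (by omega : i < i+2))]
          simp only [eval_int, ITm.eval, upd_self, upd2_0]
          exact h1
        · rw [ihu _ (i+2) ξ _ (by exact (by omega : i+1 < i+2))]
          simp only [eval_int, ITm.eval, upd_self, upd2_0]
          exact h2
        · rw [GTm.eval_update V (by exact hV) (by omega : i ≤ i+1),
              GTm.eval_update V hV (le_refl i)]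
          exact h3
  | div t u iht ihu =>
      intro V i ξ η hV
      simp only [valF, S0F.sat, MGT.subst, MGT.vals, Set.mem_setOf_eq, CRel.holds,
        eval_int, eval_nvar, ITm.eval, upd_self, upd3_0, upd3_1, pterm_le_num, ne_eq,
        PTerm.num.injEq]
      constructor
      · rintro ⟨m, n, k, h1, h2, h3, h4, h5⟩
        rw [iht _ (i+3) ξ _ (by exact (by omega : i < i+3))] at h1
        rw [ihu _ (i+3) ξ _ (by exact (by omega : i+1 < i+3))] at h2
        simp only [eval_int, eval_nvar, upd3_0, upd3_1] at h1 h2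
        have hlt : |m| < (k+1) * |n| := lt_of_le_of_ne h4.1 h4.2
        have hn0 : n ≠ 0 := npos_of_bounds h3 hlt
        have hb : (0:ℤ) < |n| := abs_pos.mpr hn0
        have hk : k = |m| / |n| := kuniq hb h3 hlt
        rcases h5 with ⟨hge, heq⟩ | ⟨hlt2, heq⟩
        · rw [eval_update3 V hV] at heq
          refine ⟨m, n, h1, h2, hn0, ?_⟩
          rw [heq]; congr 1
          simp only [tdiv]; rw [tdiv_sign_nonneg hn0 hge, ← hk]
        · rw [eval_update3 V hV] at heq
          have hmn : m * n < 0 := lt_of_le_of_ne hlt2.1 hlt2.2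
          refine ⟨m, n, h1, h2, hn0, ?_⟩
          rw [heq]; congr 1
          simp only [tdiv]; rw [tdiv_sign_neg hmn, ← hk]; ring
      · rintro ⟨m, n, h1, h2, hn0, heq⟩
        have hb : (0:ℤ) < |n| := abs_pos.mpr hn0
        obtain ⟨hb1, hb2⟩ := tdiv_bounds (m := m) hn0
        refine ⟨m, n, |m| / |n|, ?_, ?_, hb1, ⟨le_of_lt hb2, ne_of_lt hb2⟩, ?_⟩
        · rw [iht _ (i+3) ξ _ (by exact (by omega : i < i+3))]
          simp only [eval_int, eval_nvar, upd3_0]; exact h1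
        · rw [ihu _ (i+3) ξ _ (by exact (by omega : i+1 < i+3))]
          simp only [eval_int, eval_nvar, upd3_1]; exact h2
        · rcases le_or_gt 0 (m*n) with hs | hs
          · left
            refine ⟨hs, ?_⟩
            rw [eval_update3 V hV, heq]
            congr 1
            simp only [tdiv]; rw [tdiv_sign_nonneg hn0 hs]
          · right
            refine ⟨⟨le_of_lt hs, ne_of_lt hs⟩, ?_⟩
            rw [eval_update3 V hV, heq]
            congr 1
            simp only [tdiv]; rw [tdiv_sign_neg hs]; ring
  | mod t u iht ihu =>
      intro V i ξ η hV
      simp only [valF, S0F.sat, MGT.subst, MGT.vals, Set.mem_setOf_eq, CRel.holds,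
        eval_int, eval_nvar, ITm.eval, upd_self, upd3_0, upd3_1, pterm_le_num, ne_eq,
        PTerm.num.injEq]
      constructor
      · rintro ⟨m, n, k, h1, h2, h3, h4, h5⟩
        rw [iht _ (i+3) ξ _ (by exact (by omega : i < i+3))] at h1
        rw [ihu _ (i+3) ξ _ (by exact (by omega : i+1 < i+3))] at h2
        simp only [eval_int, eval_nvar, upd3_0, upd3_1] at h1 h2
        have hlt : |m| < (k+1) * |n| := lt_of_le_of_ne h4.1 h4.2
        have hn0 : n ≠ 0 := npos_of_bounds h3 hlt
        have hb : (0:ℤ) < |n| := abs_pos.mpr hn0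
        have hk : k = |m| / |n| := kuniq hb h3 hlt
        rcases h5 with ⟨hge, heq⟩ | ⟨hlt2, heq⟩
        · rw [eval_update3 V hV] at heq
          refine ⟨m, n, h1, h2, hn0, ?_⟩
          rw [heq]; congr 1
          simp only [tdiv]; rw [tdiv_sign_nonneg hn0 hge, ← hk]; ring
        · rw [eval_update3 V hV] at heq
          have hmn : m * n < 0 := lt_of_le_of_ne hlt2.1 hlt2.2
          refine ⟨m, n, h1, h2, hn0, ?_⟩
          rw [heq]; congr 1
          simp only [tdiv]; rw [tdiv_sign_neg hmn, ← hk]; ring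
      · rintro ⟨m, n, h1, h2, hn0, heq⟩
        have hb : (0:ℤ) < |n| := abs_pos.mpr hn0
        obtain ⟨hb1, hb2⟩ := tdiv_bounds (m := m) hn0
        refine ⟨m, n, |m| / |n|, ?_, ?_, hb1, ⟨le_of_lt hb2, ne_of_lt hb2⟩, ?_⟩
        · rw [iht _ (i+3) ξ _ (by exact (by omega : i < i+3))]
          simp only [eval_int, eval_nvar, upd3_0]; exact h1
        · rw [ihu _ (i+3) ξ _ (by exact (by omega : i+1 < i+3))]
          simp only [eval_int, eval_nvar, upd3_1]; exact h2
        · rcases le_or_gt 0 (m*n) with hs | hs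
          · left
            refine ⟨hs, ?_⟩
            rw [eval_update3 V hV, heq]
            congr 1
            simp only [tdiv]; rw [tdiv_sign_nonneg hn0 hs]; ring
          · right
            refine ⟨⟨le_of_lt hs, ne_of_lt hs⟩, ?_⟩
            rw [eval_update3 V hV, heq]
            congr 1
            simp only [tdiv]; rw [tdiv_sign_neg hs]; ring
  | intv t u iht ihu =>
      intro V i ξ η hV
      simp only [valF, S0F.sat, MGT.subst, MGT.vals, Set.mem_setOf_eq, CRel.holds,
        eval_int, eval_nvar, ITm.eval, upd_self, upd3_0, upd3_1, pterm_le_num]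
      constructor
      · rintro ⟨m, n, k, h1, h2, h3, h4, h5⟩
        rw [iht _ (i+3) ξ _ (by exact (by omega : i < i+3))] at h1
        rw [ihu _ (i+3) ξ _ (by exact (by omega : i+1 < i+3))] at h2
        simp only [eval_int, eval_nvar, upd3_0, upd3_1] at h1 h2
        rw [eval_update3 V hV] at h5
        exact ⟨m, n, k, h1, h2, h3, h4, h5⟩
      · rintro ⟨m, n, k, h1, h2, h3, h4, h5⟩
        refine ⟨m, n, k, ?_, ?_, h3, h4, ?_⟩
        · rw [iht _ (i+3) ξ _ (by exact (by omega : i < i+3))]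
          simp only [eval_int, eval_nvar, upd3_0]; exact h1
        · rw [ihu _ (i+3) ξ _ (by exact (by omega : i+1 < i+3))]
          simp only [eval_int, eval_nvar, upd3_1]; exact h2
        · rw [eval_update3 V hV]; exact h5


/-! ### htSat = sat for implication-free, atom-free formulas -/

def S0F.noInt : S0F → Prop
  | .patom _ _ => False
  | .imp _ _ => False
  | .bot => True
  | .cmp _ _ _ => True
  | .and F G | .or F G => F.noInt ∧ G.noInt
  | .allG _ F | .exG _ F | .allI _ F | .exI _ F => F.noInt

lemma htSat_of_noInt {v Hs J} (F : S0F) (h : F.noInt) :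
    ∀ ξ η, (F.htSat v Hs J ξ η ↔ F.sat v J ξ η) := by
  induction F with
  | patom p ts => exact absurd h not_false
  | imp F G ihF ihG => exact absurd h not_false
  | bot => intro ξ η; exact Iff.rfl
  | cmp r a b => intro ξ η; exact Iff.rfl
  | and F G ihF ihG =>
      intro ξ η
      exact and_congr (ihF h.1 ξ η) (ihG h.2 ξ η)
  | or F G ihF ihG =>
      intro ξ η
      exact or_congr (ihF h.1 ξ η) (ihG h.2 ξ η)
  | allG n F ih => intro ξ η; exact forall_congr' fun d => ih h _ η
  | exG n F ih => intro ξ η; exact exists_congr fun d => ih h _ η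
  | allI n F ih => intro ξ η; exact forall_congr' fun d => ih h ξ _
  | exI n F ih => intro ξ η; exact exists_congr fun d => ih h ξ _

lemma valF_noInt (t : MGT) : ∀ V i, (valF t V i).noInt := by
  induction t with
  | pre p => intro V i; trivial
  | var n => intro V i; trivial
  | abs t ih => intro V i; exact ⟨ih _ _, trivial⟩
  | add t u iht ihu | sub t u iht ihu | mul t u iht ihu =>
      intro V i; exact ⟨iht _ _, ihu _ _, trivial⟩
  | div t u iht ihu | mod t u iht ihu =>
      intro V i
      exact ⟨iht _ _, ihu _ _, trivial, trivial, ⟨trivial, trivial⟩, ⟨trivial, trivial⟩⟩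
  | intv t u iht ihu =>
      intro V i; exact ⟨iht _ _, ihu _ _, trivial, trivial, trivial⟩

lemma valF_htSat {Hs J : Set GAtom} (t : MGT) (V : GTm) (i : ℕ) (ξ η) (hV : V.vlt i) :
    S0F.htSat symv Hs J ξ η (valF t V i) ↔ V.eval symv ξ η ∈ (t.subst ξ).vals := by
  rw [htSat_of_noInt _ (valF_noInt t V i), valF_sat J t V i ξ η hV]

/-- here-and-there satisfaction with `Hs = J` is classical satisfaction -/
lemma htSat_JJ {v J} (F : S0F) : ∀ ξ η, (F.htSat v J J ξ η ↔ F.sat v J ξ η) := by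
  induction F with
  | patom p ts => intro ξ η; exact Iff.rfl
  | cmp r a b => intro ξ η; exact Iff.rfl
  | bot => intro ξ η; exact Iff.rfl
  | and F G ihF ihG => intro ξ η; exact and_congr (ihF ξ η) (ihG ξ η)
  | or F G ihF ihG => intro ξ η; exact or_congr (ihF ξ η) (ihG ξ η)
  | imp F G ihF ihG =>
      intro ξ η
      simp only [S0F.htSat, S0F.sat, ihF ξ η, ihG ξ η, and_self]
  | allG n F ih => intro ξ η; exact forall_congr' fun d => ih _ η
  | exG n F ih => intro ξ η; exact exists_congr fun d => ih _ η
  | allI n F ih => intro ξ η; exact forall_congr' fun d => ih ξ _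
  | exI n F ih => intro ξ η; exact exists_congr fun d => ih ξ _

/-! ### quantifier block lemmas -/

lemma exGs_htSat {v Hs J η} (k : ℕ) : ∀ (g : ℕ) (F : S0F) (ξ : ℕ → PTerm),
    (S0F.htSat v Hs J ξ η (exGs g k F) ↔
      ∃ ξ' : ℕ → PTerm, (∀ m, m < g ∨ g + k ≤ m → ξ' m = ξ m) ∧ S0F.htSat v Hs J ξ' η F) := by
  induction k with
  | zero =>
      intro g F ξ
      simp only [exGs]
      constructor
      · intro h; exact ⟨ξ, fun _ _ => rfl, h⟩
      · rintro ⟨ξ', h1, h2⟩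
        have : ξ' = ξ := funext fun m => h1 m (by omega)
        rwa [this] at h2
  | succ k ih =>
      intro g F ξ
      simp only [exGs, S0F.htSat]
      constructor
      · rintro ⟨d, h⟩
        rw [ih (g+1) F _] at h
        obtain ⟨ξ', h1, h2⟩ := h
        refine ⟨ξ', fun m hm => ?_, h2⟩
        rcases hm with hm | hm
        · rw [h1 m (by omega), Function.update_of_ne (by omega)]
        · rw [h1 m (by omega), Function.update_of_ne (by omega)]
      · rintro ⟨ξ', h1, h2⟩
        refine ⟨ξ' g, ?_⟩
        rw [ih (g+1) F _]
        refine ⟨ξ', fun m hm => ?_, h2⟩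
        rcases eq_or_ne m g with rfl | hne
        · rw [Function.update_self]
        · rw [Function.update_of_ne hne]
          rcases hm with hm | hm
          · exact h1 m (by omega)
          · exact h1 m (by omega)

lemma allGs_htSat {v Hs J η} (n : ℕ) : ∀ (F : S0F) (ξ : ℕ → PTerm),
    (S0F.htSat v Hs J ξ η (allGs n F) ↔
      ∀ ξ' : ℕ → PTerm, (∀ m, n ≤ m → ξ' m = ξ m) → S0F.htSat v Hs J ξ' η F) := by
  induction n with
  | zero =>
      intro F ξ
      simp only [allGs]
      constructor
      · intro h ξ' h1
        have : ξ' = ξ := funext fun m => h1 m (by omega)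
        rwa [this]
      · intro h; exact h ξ (fun _ _ => rfl)
  | succ n ih =>
      intro F ξ
      simp only [allGs, S0F.htSat]
      constructor
      · intro h ξ' h1
        have := (ih F _).mp (h (ξ' n))
        refine this ξ' fun m hm => ?_
        rcases eq_or_ne m n with rfl | hne
        · rw [Function.update_self]
        · rw [Function.update_of_ne hne]; exact h1 m (by omega)
      · intro h d
        rw [ih F _]
        intro ξ' h1
        refine h ξ' fun m hm => ?_
        rw [h1 m (by omega), Function.update_of_ne (by omega)]

/-! ### rsOf and overrides -/

def rsOf (ξ : ℕ → PTerm) (g n : ℕ) : List PTerm := (List.range n).map fun i => ξ (g+i)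

lemma rsOf_succ (ξ : ℕ → PTerm) (g n : ℕ) : rsOf ξ g (n+1) = ξ g :: rsOf ξ (g+1) n := by
  simp only [rsOf, List.range_succ_eq_map, List.map_cons, Nat.add_zero, List.map_map]
  congr 1
  apply List.map_congr_left
  intro i _
  simp only [Function.comp_apply]
  congr 1
  omega

@[simp] lemma rsOf_length (ξ g n) : (rsOf ξ g n).length = n := by simp [rsOf]

def override (f : ℕ → PTerm) (g : ℕ) (rs : List PTerm) : ℕ → PTerm :=
  fun m => if h : g ≤ m ∧ m < g + rs.length then rs.get ⟨m - g, by omega⟩ else f m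

lemma override_lt {f g rs m} (h : m < g) : override f g rs m = f m := by
  rw [override, dif_neg (by omega)]

lemma override_ge {f g rs m} (h : g + rs.length ≤ m) : override f g rs m = f m := by
  rw [override, dif_neg (by omega)]

lemma rsOf_override (f : ℕ → PTerm) (g : ℕ) (rs : List PTerm) :
    rsOf (override f g rs) g rs.length = rs := by
  apply List.ext_get (by simp)
  intro i h1 h2
  simp only [rsOf, List.get_eq_getElem, List.getElem_map, List.getElem_range]
  simp only [rsOf_length] at h1
  rw [override, dif_pos (by omega)]
  simp only [List.get_eq_getElem]
  congr 1
  omega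

lemma valsList_length : ∀ (ts : List MGT) (rs : List PTerm), rs ∈ valsList ts → rs.length = ts.length := by
  intro ts
  induction ts with
  | nil => intro rs h; simp only [valsList, Set.mem_singleton_iff] at h; simp [h]
  | cons t ts ih =>
      rintro rs ⟨r, rs', h1, h2, rfl⟩
      simp [ih rs' h2]

/-! ### vb and subst congruence lemmas -/

lemma le_foldr_max {α : Type} (f : α → ℕ) : ∀ (l : List α) (x : α), x ∈ l → f x ≤ (l.map f).foldr max 0 := by
  intro l
  induction l with
  | nil => intro x h; cases h
  | cons a l ih =>
      intro x h
      rcases List.mem_cons.mp h with rfl | h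
      · simp [List.foldr]
      · simp only [List.map_cons, List.foldr_cons]
        exact le_trans (ih x h) (le_max_right _ _)

lemma MAtom.subst_congr {σ σ' : ℕ → PTerm} (a : MAtom) (h : ∀ m < a.vb, σ m = σ' m) :
    a.subst σ = a.subst σ' := by
  simp only [MAtom.subst, MAtom.mk.injEq, true_and]
  apply List.map_congr_left
  intro t ht
  exact MGT.subst_congr t fun n hn => h n (lt_of_lt_of_le hn (le_foldr_max MGT.vb a.args t ht))

lemma MBodyElem.subst_congr {σ σ' : ℕ → PTerm} (e : MBodyElem) (h : ∀ m < e.vb, σ m = σ' m) :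
    e.subst σ = e.subst σ' := by
  cases e with
  | lit l =>
      cases l with
      | pos a | neg a | nneg a =>
          simp only [MBodyElem.subst, MLit.subst]
          rw [MAtom.subst_congr a h]
  | cmp c =>
      simp only [MBodyElem.subst, MComp.subst]
      rw [MGT.subst_congr c.l fun n hn => h n (lt_of_lt_of_le hn (le_max_left _ _)),
          MGT.subst_congr c.r fun n hn => h n (lt_of_lt_of_le hn (le_max_right _ _))]

lemma body_vb_le (R : MRule) (e : MBodyElem) (h : e ∈ R.body) : e.vb ≤ R.vb :=
  le_trans (le_foldr_max MBodyElem.vb R.body e h) (le_max_right _ _)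

lemma head_vb_le (R : MRule) : R.head.vb ≤ R.vb := le_max_left _ _


lemma varsList_eval (v ξ η g n) : (varsList g n).map (GTm.eval v ξ η) = rsOf ξ g n := by
  simp only [varsList, rsOf, List.map_map]
  rfl

lemma valsFml_htSat {Hs J : Set GAtom} {η} : ∀ (ts : List MGT) (g : ℕ) (ξ : ℕ → PTerm),
    (S0F.htSat symv Hs J ξ η (valsFml ts g) ↔
      rsOf ξ g ts.length ∈ valsList (ts.map (MGT.subst ξ))) := by
  intro ts
  induction ts with
  | nil =>
      intro g ξ
      simp [valsFml, S0F.top, S0F.htSat, S0F.sat, rsOf, valsList]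
  | cons t ts ih =>
      intro g ξ
      simp only [valsFml, S0F.htSat, List.length_cons, List.map_cons, rsOf_succ, valsList,
        Set.mem_setOf_eq]
      rw [valF_htSat t (.var g) 0 ξ η trivial, ih (g+1) ξ]
      constructor
      · rintro ⟨h1, h2⟩
        exact ⟨ξ g, rsOf ξ (g+1) ts.length, h1, h2, rfl⟩
      · rintro ⟨r, rs', h1, h2, heq⟩
        injection heq with h3 h4
        subst h3; rw [h4]
        exact ⟨h1, h2⟩

lemma subst_map_congr {ξ' ξ : ℕ → PTerm} (ts : List MGT) (g : ℕ)
    (hvb : ∀ t ∈ ts, MGT.vb t ≤ g) (hag : ∀ m < g, ξ' m = ξ m) :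
    ts.map (MGT.subst ξ') = ts.map (MGT.subst ξ) := by
  apply List.map_congr_left
  intro t ht
  exact MGT.subst_congr t fun n hn => hag n (lt_of_lt_of_le hn (hvb t ht))

/-- Core lemma for the `exGs (valsFml ∧ ⋯)` pattern. -/
lemma exGs_vals_core {Hs J : Set GAtom} {η} (ts : List MGT) (g : ℕ) (ξ : ℕ → PTerm)
    (B : S0F) (Φ : List PTerm → Prop)
    (hvb : ∀ t ∈ ts, MGT.vb t ≤ g)
    (hB : ∀ ξ' : ℕ → PTerm, S0F.htSat symv Hs J ξ' η B ↔ Φ (rsOf ξ' g ts.length)) :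
    S0F.htSat symv Hs J ξ η (exGs g ts.length (.and (valsFml ts g) B)) ↔
      ∃ rs ∈ valsList (ts.map (MGT.subst ξ)), Φ rs := by
  rw [exGs_htSat]
  constructor
  · rintro ⟨ξ', hag, h1, h2⟩
    rw [valsFml_htSat] at h1
    rw [subst_map_congr ts g hvb (fun m hm => hag m (Or.inl hm))] at h1
    exact ⟨rsOf ξ' g ts.length, h1, (hB ξ').mp h2⟩
  · rintro ⟨rs, hrs, hΦ⟩
    have hlen : rs.length = ts.length := by
      rw [valsList_length _ _ hrs, List.length_map]
    refine ⟨override ξ g rs, fun m hm => ?_, ?_, ?_⟩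
    · rcases hm with hm | hm
      · exact override_lt hm
      · exact override_ge (by omega)
    · rw [valsFml_htSat]
      rw [subst_map_congr ts g hvb (fun m hm => override_lt hm)]
      rw [← hlen, rsOf_override]
      exact hrs
    · rw [hB, ← hlen, rsOf_override]
      exact hΦ

lemma mem_args_vb (a : MAtom) (t : MGT) (h : t ∈ a.args) : t.vb ≤ a.vb :=
  le_foldr_max MGT.vb a.args t h

lemma tauBF_htSat {Hs J : Set GAtom} {η} (e : MBodyElem) (g : ℕ) (ξ : ℕ → PTerm)
    (hvb : e.vb ≤ g) :
    S0F.htSat symv Hs J ξ η (tauBF e g) ↔ IProp.htSat Hs J (tauBodyElem (e.subst ξ)) := by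
  cases e with
  | lit l =>
      cases l with
      | pos a =>
          simp only [tauBF, MBodyElem.subst, MLit.subst, tauBodyElem, tauLit, MAtom.subst,
            IProp.htSat, Subtype.exists, exists_prop]
          rw [exGs_vals_core a.args g ξ _ (fun rs => (a.p, rs) ∈ Hs)
            (fun t ht => le_trans (mem_args_vb a t ht) hvb)
            (fun ξ' => by simp only [S0F.htSat, varsList_eval])]
      | neg a =>
          simp only [tauBF, MBodyElem.subst, MLit.subst, tauBodyElem, tauLit, MAtom.subst,
            IProp.htSat, Subtype.exists, exists_prop]
          rw [exGs_vals_core a.args g ξ _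
            (fun rs => ((a.p, rs) ∈ Hs → False) ∧ ((a.p, rs) ∈ J → False))
            (fun t ht => le_trans (mem_args_vb a t ht) hvb)
            (fun ξ' => by
              simp only [S0F.neg, S0F.htSat, S0F.sat, varsList_eval])]
      | nneg a =>
          simp only [tauBF, MBodyElem.subst, MLit.subst, tauBodyElem, tauLit, MAtom.subst,
            IProp.htSat, Subtype.exists, exists_prop]
          rw [exGs_vals_core a.args g ξ _
            (fun rs => ((((a.p, rs) ∈ Hs → False) ∧ ((a.p, rs) ∈ J → False)) → False) ∧
              (((a.p, rs) ∈ J → False) → False))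
            (fun t ht => le_trans (mem_args_vb a t ht) hvb)
            (fun ξ' => by
              simp only [S0F.neg, S0F.htSat, S0F.sat, varsList_eval])]
          constructor
          · rintro ⟨rs, hrs, h1, h2⟩
            exact ⟨rs, hrs, fun h => h1 ⟨h.1, h.2⟩, fun h => h2 h.1⟩
          · rintro ⟨rs, hrs, h1, h2⟩
            exact ⟨rs, hrs, fun h => h1 ⟨h.1, h.2⟩, fun h => h2 ⟨h, h⟩⟩
  | cmp c =>
      have hl : c.l.vb ≤ g := le_trans (le_max_left _ _) hvb
      have hr : c.r.vb ≤ g := le_trans (le_max_right _ _) hvb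
      simp only [tauBF, MBodyElem.subst, tauBodyElem, tauCmp, MComp.subst, S0F.htSat]
      constructor
      · rintro ⟨d1, d2, h1, h2, h3⟩
        rw [valF_htSat c.l (.var g) 0 _ η trivial] at h1
        rw [valF_htSat c.r (.var (g+1)) 0 _ η trivial] at h2
        rw [MGT.subst_congr c.l (σ' := ξ) (fun n hn => by
          rw [Function.update_of_ne (by omega), Function.update_of_ne (by omega)])] at h1
        rw [MGT.subst_congr c.r (σ' := ξ) (fun n hn => by
          rw [Function.update_of_ne (by omega), Function.update_of_ne (by omega)])] at h2
        have e1 : GTm.eval symv (Function.update (Function.update ξ g d1) (g+1) d2) η (.var g) = d1 := by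
          simp only [eval_gvar]
          rw [Function.update_of_ne (by omega), Function.update_self]
        have e2 : GTm.eval symv (Function.update (Function.update ξ g d1) (g+1) d2) η (.var (g+1)) = d2 := by
          simp only [eval_gvar, Function.update_self]
        rw [e1] at h1 h3
        rw [e2] at h2 h3
        rw [if_pos ⟨d1, h1, d2, h2, h3⟩]
        exact fun x => x.elim
      · intro h
        by_cases hc : ∃ r1 ∈ (c.l.subst ξ).vals, ∃ r2 ∈ (c.r.subst ξ).vals, c.rel.holds r1 r2
        · obtain ⟨r1, hr1, r2, hr2, hh⟩ := hc
          refine ⟨r1, r2, ?_, ?_, ?_⟩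
          · rw [valF_htSat c.l (.var g) 0 _ η trivial]
            rw [MGT.subst_congr c.l (σ' := ξ) (fun n hn => by
              rw [Function.update_of_ne (by omega), Function.update_of_ne (by omega)])]
            simpa only [eval_gvar, Function.update_of_ne (show g ≠ g+1 by omega),
              Function.update_self] using hr1
          · rw [valF_htSat c.r (.var (g+1)) 0 _ η trivial]
            rw [MGT.subst_congr c.r (σ' := ξ) (fun n hn => by
              rw [Function.update_of_ne (by omega), Function.update_of_ne (by omega)])]
            simpa only [eval_gvar, Function.update_self] using hr2
          · simpa only [eval_gvar, Function.update_of_ne (show g ≠ g+1 by omega),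
              Function.update_self] using hh
        · rw [if_neg hc] at h
          exact absurd h (by simp [IProp.htSat])

lemma tauBodyF_htSat {Hs J : Set GAtom} {η} (b : List MBodyElem) (g : ℕ) (ξ : ℕ → PTerm)
    (hvb : ∀ e ∈ b, e.vb ≤ g) :
    S0F.htSat symv Hs J ξ η (tauBodyF b g) ↔
      IProp.htSat Hs J (tauBody (b.map (MBodyElem.subst ξ))) := by
  have hR : IProp.htSat Hs J (tauBody (b.map (MBodyElem.subst ξ))) ↔
      ∀ e ∈ b, IProp.htSat Hs J (tauBodyElem (e.subst ξ)) := by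
    simp only [tauBody, IProp.htSat, Subtype.forall, List.mem_map]
    constructor
    · intro h e he; exact h _ ⟨e, he, rfl⟩
    · rintro h e' ⟨e, he, rfl⟩; exact h e he
  rw [hR]
  clear hR
  induction b with
  | nil => simp [tauBodyF, S0F.top, S0F.htSat, S0F.sat]
  | cons e b ih =>
      have h1 := tauBF_htSat (Hs := Hs) (J := J) (η := η) e g ξ (hvb e List.mem_cons_self)
      have h2 := ih (fun e' he' => hvb e' (List.mem_cons_of_mem e he'))
      simp only [tauBodyF] at h2
      simp only [tauBodyF, List.foldr_cons, S0F.htSat]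
      rw [List.forall_mem_cons]
      exact and_congr h1 h2


lemma core_basic {J X : Set GAtom} (bd : List MBodyElem) (a : MAtom) (vb : ℕ) (ξ : ℕ → PTerm)
    (hvb_body : ∀ e ∈ bd, MBodyElem.vb e ≤ vb) (hvb_a : a.vb ≤ vb) :
    (∀ ξ' : ℕ → PTerm, (∀ m, vb + a.args.length ≤ m → ξ' m = ξ m) →
       ((rsOf ξ' vb a.args.length ∈ valsList (a.args.map (MGT.subst ξ')) ∧
         IProp.htSat X J (tauBody (bd.map (MBodyElem.subst ξ')))) →
       (a.p, rsOf ξ' vb a.args.length) ∈ X))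
    ↔ ∀ σ : ℕ → PTerm, IProp.htSat X J (tauBody (bd.map (MBodyElem.subst σ))) →
        ∀ rs ∈ valsList (a.args.map (MGT.subst σ)), (a.p, rs) ∈ X := by
  constructor
  · intro h σ hbody rs hrs
    have hlen : rs.length = a.args.length := by
      rw [valsList_length _ _ hrs, List.length_map]
    set ξ' : ℕ → PTerm := override (fun m => if m < vb then σ m else ξ m) vb rs with hξ'
    have hlow : ∀ m, m < vb → ξ' m = σ m := fun m hm => by
      rw [hξ', override_lt hm, if_pos hm]
    have hbodyc : bd.map (MBodyElem.subst ξ') = bd.map (MBodyElem.subst σ) :=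
      List.map_congr_left fun e he => MBodyElem.subst_congr e fun m hm =>
        hlow m (lt_of_lt_of_le hm (hvb_body e he))
    have hargsc : a.args.map (MGT.subst ξ') = a.args.map (MGT.subst σ) :=
      subst_map_congr a.args vb (fun t ht => le_trans (mem_args_vb a t ht) hvb_a) hlow
    have hrsOf : rsOf ξ' vb a.args.length = rs := by rw [hξ', ← hlen, rsOf_override]
    have hagree : ∀ m, vb + a.args.length ≤ m → ξ' m = ξ m := fun m hm => by
      rw [hξ', override_ge (by omega), if_neg (by omega)]
    have := h ξ' hagree ⟨by rw [hrsOf, hargsc]; exact hrs, by rw [hbodyc]; exact hbody⟩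
    rwa [hrsOf] at this
  · intro h ξ' hag hh
    exact h ξ' hh.2 _ hh.1

lemma core_choice {J X : Set GAtom} (bd : List MBodyElem) (a : MAtom) (vb : ℕ) (ξ : ℕ → PTerm)
    (hvb_body : ∀ e ∈ bd, MBodyElem.vb e ≤ vb) (hvb_a : a.vb ≤ vb) :
    (∀ ξ' : ℕ → PTerm, (∀ m, vb + a.args.length ≤ m → ξ' m = ξ m) →
       ((rsOf ξ' vb a.args.length ∈ valsList (a.args.map (MGT.subst ξ')) ∧
         IProp.htSat X J (tauBody (bd.map (MBodyElem.subst ξ'))) ∧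
         (a.p, rsOf ξ' vb a.args.length) ∈ J) →
       (a.p, rsOf ξ' vb a.args.length) ∈ X))
    ↔ ∀ σ : ℕ → PTerm, IProp.htSat X J (tauBody (bd.map (MBodyElem.subst σ))) →
        ∀ rs ∈ valsList (a.args.map (MGT.subst σ)), ((a.p, rs) ∈ J → (a.p, rs) ∈ X) := by
  constructor
  · intro h σ hbody rs hrs hJ
    have hlen : rs.length = a.args.length := by
      rw [valsList_length _ _ hrs, List.length_map]
    set ξ' : ℕ → PTerm := override (fun m => if m < vb then σ m else ξ m) vb rs with hξ'
    have hlow : ∀ m, m < vb → ξ' m = σ m := fun m hm => by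
      rw [hξ', override_lt hm, if_pos hm]
    have hbodyc : bd.map (MBodyElem.subst ξ') = bd.map (MBodyElem.subst σ) :=
      List.map_congr_left fun e he => MBodyElem.subst_congr e fun m hm =>
        hlow m (lt_of_lt_of_le hm (hvb_body e he))
    have hargsc : a.args.map (MGT.subst ξ') = a.args.map (MGT.subst σ) :=
      subst_map_congr a.args vb (fun t ht => le_trans (mem_args_vb a t ht) hvb_a) hlow
    have hrsOf : rsOf ξ' vb a.args.length = rs := by rw [hξ', ← hlen, rsOf_override]
    have hagree : ∀ m, vb + a.args.length ≤ m → ξ' m = ξ m := fun m hm => by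
      rw [hξ', override_ge (by omega), if_neg (by omega)]
    have := h ξ' hagree ⟨by rw [hrsOf, hargsc]; exact hrs,
      by rw [hbodyc]; exact hbody, by rw [hrsOf]; exact hJ⟩
    rwa [hrsOf] at this
  · intro h ξ' hag hh
    exact h ξ' hh.2.1 _ hh.1 hh.2.2

lemma core_cons {J X : Set GAtom} (bd : List MBodyElem) (vb : ℕ) (ξ : ℕ → PTerm)
    (hvb_body : ∀ e ∈ bd, MBodyElem.vb e ≤ vb) :
    (∀ ξ' : ℕ → PTerm, (∀ m, vb ≤ m → ξ' m = ξ m) →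
       ¬ IProp.htSat X J (tauBody (bd.map (MBodyElem.subst ξ'))))
    ↔ ∀ σ : ℕ → PTerm, ¬ IProp.htSat X J (tauBody (bd.map (MBodyElem.subst σ))) := by
  constructor
  · intro h σ hbody
    set ξ' : ℕ → PTerm := fun m => if m < vb then σ m else ξ m with hξ'
    have hlow : ∀ m, m < vb → ξ' m = σ m := fun m hm => by rw [hξ']; exact if_pos hm
    have hbodyc : bd.map (MBodyElem.subst ξ') = bd.map (MBodyElem.subst σ) :=
      List.map_congr_left fun e he => MBodyElem.subst_congr e fun m hm =>
        hlow m (lt_of_lt_of_le hm (hvb_body e he))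
    exact h ξ' (fun m hm => by rw [hξ']; exact if_neg (by omega)) (by rw [hbodyc]; exact hbody)
  · intro h ξ' hag
    exact h ξ'

lemma forall_imp_and_split {α : Sort*} (P C1 C2 : α → Prop) :
    (∀ x, P x → (C1 x ∧ C2 x)) ↔ ((∀ x, P x → C1 x) ∧ (∀ x, P x → C2 x)) :=
  ⟨fun h => ⟨fun x hx => (h x hx).1, fun x hx => (h x hx).2⟩,
   fun h x hx => ⟨h.1 x hx, h.2 x hx⟩⟩


lemma sat_iff_IPhtSat {J : Set GAtom} (b : List MBodyElem) (g : ℕ) (ξ : ℕ → PTerm) (η : ℕ → ℤ)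
    (hvb : ∀ e ∈ b, MBodyElem.vb e ≤ g) :
    S0F.sat symv J ξ η (tauBodyF b g) ↔
      IProp.htSat J J (tauBody (b.map (MBodyElem.subst ξ))) :=
  (htSat_JJ _ ξ η).symm.trans (tauBodyF_htSat b g ξ hvb)

lemma valsFml_sat {J : Set GAtom} (ts : List MGT) (g : ℕ) (ξ : ℕ → PTerm) (η : ℕ → ℤ) :
    S0F.sat symv J ξ η (valsFml ts g) ↔
      rsOf ξ g ts.length ∈ valsList (ts.map (MGT.subst ξ)) :=
  (htSat_JJ _ ξ η).symm.trans (valsFml_htSat ts g ξ)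

lemma tauStar_htSat_iff (R : MRule) (Hs J : Set GAtom) (ξ : ℕ → PTerm) (η : ℕ → ℤ) :
    S0F.htSat symv Hs J ξ η (tauStar R) ↔
      ∀ σ : ℕ → PTerm, IProp.htSat Hs J (tauRule (R.subst σ)) := by
  obtain ⟨hd, bd⟩ := R
  cases hd with
  | basic a =>
      have hvba : a.vb ≤ (MRule.mk (MHead.basic a) bd).vb := by
        simpa [MHead.vb] using head_vb_le (MRule.mk (MHead.basic a) bd)
      have hvbb : ∀ e ∈ bd, MBodyElem.vb e ≤ (MRule.mk (MHead.basic a) bd).vb :=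
        fun e he => body_vb_le _ e he
      have hvbb' : ∀ e ∈ bd, MBodyElem.vb e ≤ (MRule.mk (MHead.basic a) bd).vb + a.args.length :=
        fun e he => le_trans (hvbb e he) (by omega)
      have inner : ∀ ξ' : ℕ → PTerm,
          S0F.htSat symv Hs J ξ' η
            (((valsFml a.args (MRule.mk (MHead.basic a) bd).vb).and
              (tauBodyF bd ((MRule.mk (MHead.basic a) bd).vb + a.args.length))).imp
              (S0F.patom a.p (varsList (MRule.mk (MHead.basic a) bd).vb a.args.length))) ↔
          (((rsOf ξ' (MRule.mk (MHead.basic a) bd).vb a.args.length ∈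
                valsList (a.args.map (MGT.subst ξ')) ∧
              IProp.htSat Hs J (tauBody (bd.map (MBodyElem.subst ξ')))) →
            (a.p, rsOf ξ' (MRule.mk (MHead.basic a) bd).vb a.args.length) ∈ Hs) ∧
           ((rsOf ξ' (MRule.mk (MHead.basic a) bd).vb a.args.length ∈
                valsList (a.args.map (MGT.subst ξ')) ∧
              IProp.htSat J J (tauBody (bd.map (MBodyElem.subst ξ')))) →
            (a.p, rsOf ξ' (MRule.mk (MHead.basic a) bd).vb a.args.length) ∈ J)) := by
        intro ξ'
        exact and_congr
          (imp_congr
            (and_congr (valsFml_htSat a.args _ ξ') (tauBodyF_htSat bd _ ξ' hvbb'))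
            (by simp only [S0F.htSat, varsList_eval]))
          (imp_congr
            (and_congr (valsFml_sat a.args _ ξ' η) (sat_iff_IPhtSat bd _ ξ' η hvbb'))
            (by simp only [S0F.sat, varsList_eval]))
      have Rss : ∀ σ : ℕ → PTerm,
          IProp.htSat Hs J (tauRule (MRule.subst σ ⟨MHead.basic a, bd⟩)) ↔
          ((IProp.htSat Hs J (tauBody (bd.map (MBodyElem.subst σ))) →
              ∀ rs ∈ valsList (a.args.map (MGT.subst σ)), (a.p, rs) ∈ Hs) ∧
           (IProp.htSat J J (tauBody (bd.map (MBodyElem.subst σ))) →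
              ∀ rs ∈ valsList (a.args.map (MGT.subst σ)), (a.p, rs) ∈ J)) := by
        intro σ
        constructor
        · intro h
          exact ⟨fun hb rs hrs => h.1 hb ⟨rs, hrs⟩, fun hb rs hrs => h.2 hb ⟨rs, hrs⟩⟩
        · intro h
          exact ⟨fun hb rs => h.1 hb rs.1 rs.2, fun hb rs => h.2 hb rs.1 rs.2⟩
      exact (allGs_htSat _ _ ξ).trans
        (((forall_congr' fun ξ' => imp_congr_right fun _ => inner ξ').trans
            (forall_imp_and_split _ _ _)).trans
          ((and_congr (core_basic bd a _ ξ hvbb hvba) (core_basic bd a _ ξ hvbb hvba)).trans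
            (forall_and.symm.trans (forall_congr' fun σ => (Rss σ).symm))))
  | choice a =>
      have hvba : a.vb ≤ (MRule.mk (MHead.choice a) bd).vb := by
        simpa [MHead.vb] using head_vb_le (MRule.mk (MHead.choice a) bd)
      have hvbb : ∀ e ∈ bd, MBodyElem.vb e ≤ (MRule.mk (MHead.choice a) bd).vb :=
        fun e he => body_vb_le _ e he
      have hvbb' : ∀ e ∈ bd, MBodyElem.vb e ≤ (MRule.mk (MHead.choice a) bd).vb + a.args.length :=
        fun e he => le_trans (hvbb e he) (by omega)
      have inner : ∀ ξ' : ℕ → PTerm,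
          S0F.htSat symv Hs J ξ' η
            (((valsFml a.args (MRule.mk (MHead.choice a) bd).vb).and
              ((tauBodyF bd ((MRule.mk (MHead.choice a) bd).vb + a.args.length)).and
                (S0F.neg (S0F.neg (S0F.patom a.p
                  (varsList (MRule.mk (MHead.choice a) bd).vb a.args.length)))))).imp
              (S0F.patom a.p (varsList (MRule.mk (MHead.choice a) bd).vb a.args.length))) ↔
          (((rsOf ξ' (MRule.mk (MHead.choice a) bd).vb a.args.length ∈
                valsList (a.args.map (MGT.subst ξ')) ∧
              IProp.htSat Hs J (tauBody (bd.map (MBodyElem.subst ξ'))) ∧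
              (a.p, rsOf ξ' (MRule.mk (MHead.choice a) bd).vb a.args.length) ∈ J) →
            (a.p, rsOf ξ' (MRule.mk (MHead.choice a) bd).vb a.args.length) ∈ Hs) ∧
           ((rsOf ξ' (MRule.mk (MHead.choice a) bd).vb a.args.length ∈
                valsList (a.args.map (MGT.subst ξ')) ∧
              IProp.htSat J J (tauBody (bd.map (MBodyElem.subst ξ'))) ∧
              (a.p, rsOf ξ' (MRule.mk (MHead.choice a) bd).vb a.args.length) ∈ J) →
            (a.p, rsOf ξ' (MRule.mk (MHead.choice a) bd).vb a.args.length) ∈ J)) := by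
        intro ξ'
        refine and_congr
          (imp_congr
            (and_congr (valsFml_htSat a.args _ ξ')
              (and_congr (tauBodyF_htSat bd _ ξ' hvbb')
                (by simp only [S0F.neg, S0F.htSat, S0F.sat, varsList_eval]; tauto)))
            (by simp only [S0F.htSat, varsList_eval]))
          (imp_congr
            (and_congr (valsFml_sat a.args _ ξ' η)
              (and_congr (sat_iff_IPhtSat bd _ ξ' η hvbb')
                (by simp only [S0F.neg, S0F.sat, varsList_eval]; tauto)))
            (by simp only [S0F.sat, varsList_eval]))
      have Rss : ∀ σ : ℕ → PTerm,
          IProp.htSat Hs J (tauRule (MRule.subst σ ⟨MHead.choice a, bd⟩)) ↔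
          ((IProp.htSat Hs J (tauBody (bd.map (MBodyElem.subst σ))) →
              ∀ rs ∈ valsList (a.args.map (MGT.subst σ)),
                ((a.p, rs) ∈ J → (a.p, rs) ∈ Hs)) ∧
           (IProp.htSat J J (tauBody (bd.map (MBodyElem.subst σ))) →
              ∀ rs ∈ valsList (a.args.map (MGT.subst σ)),
                ((a.p, rs) ∈ J → (a.p, rs) ∈ J))) := by
        intro σ
        constructor
        · intro h
          refine ⟨fun hb rs hrs hJ => ?_, fun hb rs hrs hJ => hJ⟩
          obtain ⟨bb, hbb⟩ := h.1 hb ⟨rs, hrs⟩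
          cases bb with
          | true => exact hbb
          | false => exact absurd hJ hbb.2
        · intro h
          refine ⟨fun hb rs => ?_, fun hb rs => ?_⟩
          · by_cases hHs : (a.p, rs.1) ∈ Hs
            · exact ⟨true, hHs⟩
            · refine ⟨false, hHs, fun hJ => hHs (h.1 hb rs.1 rs.2 hJ)⟩
          · by_cases hJ : (a.p, rs.1) ∈ J
            · exact ⟨true, hJ⟩
            · exact ⟨false, hJ, hJ⟩
      exact (allGs_htSat _ _ ξ).trans
        (((forall_congr' fun ξ' => imp_congr_right fun _ => inner ξ').trans
            (forall_imp_and_split _ _ _)).trans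
          ((and_congr (core_choice bd a _ ξ hvbb hvba) (core_choice bd a _ ξ hvbb hvba)).trans
            (forall_and.symm.trans (forall_congr' fun σ => (Rss σ).symm))))
  | cons =>
      have hvbb : ∀ e ∈ bd, MBodyElem.vb e ≤ (MRule.mk MHead.cons bd).vb :=
        fun e he => body_vb_le _ e he
      have inner : ∀ ξ' : ℕ → PTerm,
          S0F.htSat symv Hs J ξ' η
            ((tauBodyF bd (MRule.mk MHead.cons bd).vb).imp S0F.bot) ↔
          ((IProp.htSat Hs J (tauBody (bd.map (MBodyElem.subst ξ'))) → False) ∧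
           (IProp.htSat J J (tauBody (bd.map (MBodyElem.subst ξ'))) → False)) := by
        intro ξ'
        exact and_congr
          (imp_congr (tauBodyF_htSat bd _ ξ' hvbb) Iff.rfl)
          (imp_congr (sat_iff_IPhtSat bd _ ξ' η hvbb) Iff.rfl)
      have Rss : ∀ σ : ℕ → PTerm,
          IProp.htSat Hs J (tauRule (MRule.subst σ ⟨MHead.cons, bd⟩)) ↔
          ((IProp.htSat Hs J (tauBody (bd.map (MBodyElem.subst σ))) → False) ∧
           (IProp.htSat J J (tauBody (bd.map (MBodyElem.subst σ))) → False)) :=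
        fun σ => Iff.rfl
      exact (allGs_htSat _ _ ξ).trans
        (((forall_congr' fun ξ' => imp_congr_right fun _ => inner ξ').trans
            (forall_imp_and_split _ _ _)).trans
          ((and_congr (core_cons bd _ ξ hvbb) (core_cons bd _ ξ hvbb)).trans
            (forall_and.symm.trans (forall_congr' fun σ => (Rss σ).symm))))

/-- A set `J` of precomputed atoms is a stable model of the mini-gringo program `Prg`
iff the standard interpretation `J↑` is a stable model of `τ*Prg`. -/
theorem stable_iff_tauStar_stable (Prg : MProgram) (J : Set GAtom) :
    ProgStable Prg J ↔ FOStable symv (tauStarProg Prg) J xi0 eta0 := by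
  have key : ∀ Hs : Set GAtom,
      ((∀ φ ∈ tauProg Prg, φ.htSat Hs J) ↔
        (∀ F ∈ tauStarProg Prg, F.htSat symv Hs J xi0 eta0)) := by
    intro Hs
    constructor
    · intro h F hF
      obtain ⟨R, hR, rfl⟩ := hF
      rw [tauStar_htSat_iff]
      intro σ
      exact h _ ⟨R, hR, σ, rfl⟩
    · intro h φ hφ
      obtain ⟨R, hR, σ, rfl⟩ := hφ
      exact (tauStar_htSat_iff R Hs J xi0 eta0).mp (h _ ⟨R, hR, rfl⟩) σ
  have keyJ : (∀ φ ∈ tauProg Prg, φ.htSat J J) ↔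
      (∀ F ∈ tauStarProg Prg, F.sat symv J xi0 eta0) :=
    (key J).trans (forall_congr' fun F => forall_congr' fun _ => htSat_JJ F xi0 eta0)
  constructor
  · rintro ⟨h1, h2⟩
    exact ⟨keyJ.mp h1, fun Hs hHs hsat => h2 Hs hHs ((key Hs).mpr hsat)⟩
  · rintro ⟨h1, h2⟩
    exact ⟨keyJ.mpr h1, fun Hs hHs hsat => h2 Hs hHs ((key Hs).mp hsat)⟩
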